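/- arXiv:1511.06339 — 9 statements merged into one kernel-verified Lean document; each statement's English description precedes it below -/
import Mathlib

section
/- Let n ≥ 1 and let x p : ℝ → (Fin n → ℝ) be differentiable curves such that for every t the values x_1(t),…,x_n(t) are pairwise distinct, and suppose the Calogero–Moser equations of motion hold: x_i'(t) = p_i(t) and p_i'(t) = −2·∑_{j≠i} (x_i(t) − x_j(t))^{−3} for all i and t. Let L(t) be the Calogero–Moser Lax matrix of (x(t),p(t)) and let B(t) be the matrix with entries B_{ii}(t) = ∑_{l≠i} (x_i(t) − x_l(t))^{−2} and B_{ij}(t) = −(x_i(t) − x_j(t))^{−2} for i ≠ j. Then the entrywise derivative of L satisfies the Lax equation L'(t) = L(t)·B(t) − B(t)·L(t) for all t. -/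
/-!
Write `L = diag p + C` and `B = diag b - D`, where `C i j = (x i - x j)⁻¹`,
`D i j = (x i - x j)⁻²` and `b i = ∑ k, D i k`. Commutators with a diagonal matrix are explicit,
so `[L, B] i j = -(p i - p j) D i j + (b j - b i) C i j - [C, D] i j`. On the diagonal this is
`-[C, D] i i = -2 ∑ k, (x i - x k)⁻³`, which is `p i'` by the equations of motion. Off the diagonal
the three-point identity for `1/(x i - x k)`, `1/(x k - x j)` gives `[C, D] i j = (b j - b i) C i j`,
leaving `-(p i - p j)/(x i - x j)²`, which is the derivative of `1/(x i - x j)` since `x' = p`.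
-/

open Finset

/-- The Calogero–Moser Lax matrix: `L i i = p i`, `L i j = 1/(x i - x j)` for `i ≠ j`. -/
noncomputable def laxMatrix {n : ℕ} (x p : Fin n → ℝ) : Matrix (Fin n) (Fin n) ℝ :=
  Matrix.of fun i j => if i = j then p i else 1 / (x i - x j)

/-- The auxiliary matrix `B` of the Lax pair: `B i i = ∑_{l ≠ i} (x i - x l)⁻²`,
`B i j = -(x i - x j)⁻²` for `i ≠ j`. -/
noncomputable def cmB {n : ℕ} (x : Fin n → ℝ) : Matrix (Fin n) (Fin n) ℝ :=
  Matrix.of fun i j =>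
    if i = j then ∑ l ∈ univ.filter (fun l => l ≠ i), ((x i - x l) ^ 2)⁻¹
    else -((x i - x j) ^ 2)⁻¹

open Matrix

theorem diagonal_commutator_apply {ι R : Type*} [Fintype ι] [DecidableEq ι] [CommRing R]
    (d : ι → R) (M : Matrix ι ι R) (i j : ι) :
    (diagonal d * M - M * diagonal d) i j = (d i - d j) * M i j := by
  rw [Matrix.sub_apply, diagonal_mul, mul_diagonal, sub_mul, mul_comm (M i j)]

section InverseDifferences

variable {ι K : Type*} [Field K]

theorem three_point_inv_sub_identity {a b c : K} (hab : a ≠ b) (hac : a ≠ c) (hbc : b ≠ c) :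
    (a - c)⁻¹ * ((c - b) ^ 2)⁻¹ - ((a - c) ^ 2)⁻¹ * (c - b)⁻¹
      = (((b - c) ^ 2)⁻¹ - ((a - c) ^ 2)⁻¹) * (a - b)⁻¹ := by
  have := sub_ne_zero.2 hab
  have := sub_ne_zero.2 hac
  have := sub_ne_zero.2 hbc
  field_simp
  ring

-- Both matrices have zero diagonal, because `0⁻¹ = 0`.
def invSubMatrix (X : ι → K) : Matrix ι ι K := of fun i j => (X i - X j)⁻¹

def invSubSqMatrix (X : ι → K) : Matrix ι ι K := of fun i j => ((X i - X j) ^ 2)⁻¹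

variable [Fintype ι]

theorem invSub_commutator_apply_self (X : ι → K) (i : ι) :
    (invSubMatrix X * invSubSqMatrix X - invSubSqMatrix X * invSubMatrix X) i i
      = 2 * ∑ k, ((X i - X k) ^ 3)⁻¹ := by
  rw [Matrix.sub_apply, mul_apply, mul_apply, ← sum_sub_distrib, mul_sum]
  refine sum_congr rfl fun k _ => ?_
  simp only [invSubMatrix, invSubSqMatrix, of_apply]
  rw [← neg_sub (X i) (X k)]
  generalize X i - X k = a
  ring

theorem invSub_commutator_apply_of_ne [DecidableEq ι] {X : ι → K} (hX : Function.Injective X)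
    {i j : ι} (hij : i ≠ j) :
    (invSubMatrix X * invSubSqMatrix X - invSubSqMatrix X * invSubMatrix X) i j
      = (∑ k, invSubSqMatrix X j k - ∑ k, invSubSqMatrix X i k) * invSubMatrix X i j := by
  rw [Matrix.sub_apply, mul_apply, mul_apply, ← sum_sub_distrib, ← sum_sub_distrib, sum_mul,
    ← sub_eq_zero, ← sum_sub_distrib, Fintype.sum_eq_add i j hij]
  -- the summands at `k = i` and `k = j` cancel each other, all others vanish individually
  · simp only [invSubMatrix, invSubSqMatrix, of_apply, sub_self]
    rw [← neg_sub (X j) (X i)]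
    ring
  · rintro k ⟨hki, hkj⟩
    simp only [invSubMatrix, invSubSqMatrix, of_apply]
    rw [three_point_inv_sub_identity (hX.ne hij) (hX.ne hki.symm) (hX.ne hkj.symm)]
    ring

end InverseDifferences

section LaxPair

variable {n : ℕ} (X P : Fin n → ℝ)

theorem laxMatrix_eq_diagonal_add : laxMatrix X P = diagonal P + invSubMatrix X := by
  ext i j
  rcases eq_or_ne i j with rfl | hij
  · simp [laxMatrix, invSubMatrix]
  · simp [laxMatrix, invSubMatrix, hij]

theorem cmB_eq_diagonal_sub :
    cmB X = diagonal (fun i => ∑ k, invSubSqMatrix X i k) - invSubSqMatrix X := by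
  ext i j
  rcases eq_or_ne i j with rfl | hij
  · simp [cmB, invSubSqMatrix, filter_ne']
  · simp [cmB, invSubSqMatrix, hij]

theorem laxMatrix_commutator_cmB_apply (i j : Fin n) :
    (laxMatrix X P * cmB X - cmB X * laxMatrix X P) i j
      = -(P i - P j) * invSubSqMatrix X i j
        + (∑ k, invSubSqMatrix X j k - ∑ k, invSubSqMatrix X i k) * invSubMatrix X i j
        - (invSubMatrix X * invSubSqMatrix X - invSubSqMatrix X * invSubMatrix X) i j := by
  set b : Fin n → ℝ := fun i => ∑ k, invSubSqMatrix X i k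
  have hdiag : diagonal P * diagonal b = diagonal b * diagonal P := by
    rw [diagonal_mul_diagonal, diagonal_mul_diagonal, funext fun i => mul_comm (P i) (b i)]
  have hexpand : laxMatrix X P * cmB X - cmB X * laxMatrix X P
      = -(diagonal P * invSubSqMatrix X - invSubSqMatrix X * diagonal P)
        - (diagonal b * invSubMatrix X - invSubMatrix X * diagonal b)
        - (invSubMatrix X * invSubSqMatrix X - invSubSqMatrix X * invSubMatrix X) := by
    rw [laxMatrix_eq_diagonal_add, cmB_eq_diagonal_sub,
      show (fun i => ∑ k, invSubSqMatrix X i k) = b from rfl]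
    noncomm_ring [hdiag]
  rw [hexpand, Matrix.sub_apply, Matrix.sub_apply, Matrix.neg_apply, diagonal_commutator_apply,
    diagonal_commutator_apply]
  ring

theorem laxMatrix_commutator_cmB_apply_self (i : Fin n) :
    (laxMatrix X P * cmB X - cmB X * laxMatrix X P) i i
      = -2 * ∑ k ∈ univ.filter (fun k => k ≠ i), ((X i - X k) ^ 3)⁻¹ := by
  rw [laxMatrix_commutator_cmB_apply, invSub_commutator_apply_self, filter_ne',
    sum_erase _ (by simp)]
  ring

variable {X} in
theorem laxMatrix_commutator_cmB_apply_of_ne (hX : Function.Injective X) {i j : Fin n}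
    (hij : i ≠ j) :
    (laxMatrix X P * cmB X - cmB X * laxMatrix X P) i j = -(P i - P j) * ((X i - X j) ^ 2)⁻¹ := by
  rw [laxMatrix_commutator_cmB_apply, invSub_commutator_apply_of_ne hX hij, add_sub_cancel_right]
  rfl

end LaxPair

theorem lax_equation_CM_general {n : ℕ} (x p : ℝ → Fin n → ℝ)
    (hdist : ∀ t : ℝ, Function.Injective (x t))
    (hx : ∀ (i : Fin n) (t : ℝ), HasDerivAt (fun s => x s i) (p t i) t)
    (hp : ∀ (i : Fin n) (t : ℝ), HasDerivAt (fun s => p s i)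
      (-2 * ∑ j ∈ univ.filter (fun j => j ≠ i), ((x t i - x t j) ^ 3)⁻¹) t) :
    ∀ (t : ℝ) (i j : Fin n),
      HasDerivAt (fun s => laxMatrix (x s) (p s) i j)
        ((laxMatrix (x t) (p t) * cmB (x t) - cmB (x t) * laxMatrix (x t) (p t)) i j) t := by
  intro t i j
  rcases eq_or_ne i j with rfl | hij
  · rw [laxMatrix_commutator_cmB_apply_self]
    simpa [laxMatrix] using hp i t
  · rw [laxMatrix_commutator_cmB_apply_of_ne _ (hdist t) hij]
    have hL : (fun s => laxMatrix (x s) (p s) i j) = fun s => (x s i - x s j)⁻¹ := by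
      simp [laxMatrix, hij]
    have hsub : x t i - x t j ≠ 0 := sub_ne_zero.2 ((hdist t).ne hij)
    rw [hL]
    exact (((hx i t).fun_sub (hx j t)).fun_inv hsub).congr_deriv (by ring)

/-- Along solutions of the Calogero–Moser equations of motion, the Lax matrix satisfies
the Lax equation `L' = L·B − B·L` entrywise. -/
theorem lax_equation_CM {n : ℕ} (hn : 1 ≤ n) (x p : ℝ → Fin n → ℝ)
    (hdist : ∀ t : ℝ, Function.Injective (x t))
    (hx : ∀ (i : Fin n) (t : ℝ), HasDerivAt (fun s => x s i) (p t i) t)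
    (hp : ∀ (i : Fin n) (t : ℝ), HasDerivAt (fun s => p s i)
      (-2 * ∑ j ∈ univ.filter (fun j => j ≠ i), ((x t i - x t j) ^ 3)⁻¹) t) :
    ∀ (t : ℝ) (i j : Fin n),
      HasDerivAt (fun s => laxMatrix (x s) (p s) i j)
        ((laxMatrix (x t) (p t) * cmB (x t) - cmB (x t) * laxMatrix (x t) (p t)) i j) t :=
  lax_equation_CM_general x p hdist hx hp
end

section
/- Let n ≥ 1 and let x p : ℝ → (Fin n → ℝ) be differentiable curves such that for every t the values x_1(t),…,x_n(t) are pairwise distinct, and suppose x_i'(t) = p_i(t) for all i and t. Let L(t) be the Calogero–Moser Lax matrix of (x(t),p(t)), let X(t) = diag(x_1(t),…,x_n(t)), and let B(t) be the matrix with entries B_{ii}(t) = ∑_{l≠i} (x_i(t) − x_l(t))^{−2} and B_{ij}(t) = −(x_i(t) − x_j(t))^{−2} for i ≠ j. Then the extended Lax equation holds: X'(t) = X(t)·B(t) − B(t)·X(t) + L(t) for all t. -/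
open Finset

/-- The extended Lax equation: along any curve with `x' = p` and pairwise distinct
positions, the diagonal matrix `X = diag(x)` satisfies `X' = X·B − B·X + L` entrywise. -/
theorem extended_lax_equation_CM {n : ℕ} (hn : 1 ≤ n) (x p : ℝ → Fin n → ℝ)
    (hdist : ∀ t : ℝ, Function.Injective (x t))
    (hx : ∀ (i : Fin n) (t : ℝ), HasDerivAt (fun s => x s i) (p t i) t)
    (hpdiff : ∀ i : Fin n, Differentiable ℝ (fun t => p t i)) :
    ∀ (t : ℝ) (i j : Fin n),
      HasDerivAt (fun s => Matrix.diagonal (x s) i j)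
        ((Matrix.diagonal (x t) * cmB (x t) - cmB (x t) * Matrix.diagonal (x t)
          + laxMatrix (x t) (p t)) i j) t := by
  intro t i j
  by_cases h : i = j
  · subst h
    simp only [Matrix.diagonal_apply_eq, Matrix.sub_apply, Matrix.add_apply,
      Matrix.diagonal_mul, Matrix.mul_diagonal, laxMatrix, Matrix.of_apply, if_pos rfl]
    ring_nf
    simpa using hx i t
  · have hne : x t i - x t j ≠ 0 := sub_ne_zero.mpr (fun he => h (hdist t he))
    have : (Matrix.diagonal (x t) * cmB (x t) - cmB (x t) * Matrix.diagonal (x t)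
        + laxMatrix (x t) (p t)) i j = 0 := by
      simp only [Matrix.sub_apply, Matrix.add_apply, Matrix.diagonal_mul,
        Matrix.mul_diagonal, laxMatrix, cmB, Matrix.of_apply, if_neg h]
      field_simp
      ring
    rw [this]
    have : (fun s => Matrix.diagonal (x s) i j) = fun _ => (0 : ℝ) := by
      funext s; simp [Matrix.diagonal_apply_ne _ h]
    rw [this]
    exact hasDerivAt_const t 0
end

section
/- Let n ≥ 1, let x p : Fin n → ℝ with the x_i pairwise distinct, let L be the Calogero–Moser Lax matrix of (x,p), and let e ∈ ℝ^n be the all-ones vector. Then for every λ ∈ ℝ, eᵀ · adjugate(λ·Id − L) · e = trace(adjugate(λ·Id − L)); equivalently, the sum of all the entries of adjugate(λ·Id − L) equals its trace. -/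
/-!
With `X = diag x` one has `[X, L] = e eᵀ - 1`, so `M = λ·Id - L` satisfies `[X, M] = 1 - e eᵀ`.
For any matrices, `trace (adj M * [X, M]) = 0`, because `M * adj M = adj M * M = det M • 1`
makes both terms equal to `det M * trace X`. Hence `trace (adj M) = trace (adj M * e eᵀ)
= eᵀ (adj M) e`.
-/

open Matrix

namespace Matrix

variable {R : Type*} [CommRing R] {ι : Type*} [Fintype ι] [DecidableEq ι]

theorem trace_adjugate_mul_commutator (M X : Matrix ι ι R) :
    trace (adjugate M * (X * M - M * X)) = 0 := by
  have hXM : trace (adjugate M * (X * M)) = det M * trace X := by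
    rw [trace_mul_comm, Matrix.mul_assoc, mul_adjugate, Matrix.mul_smul, Matrix.mul_one,
      trace_smul, smul_eq_mul]
  have hMX : trace (adjugate M * (M * X)) = det M * trace X := by
    rw [← Matrix.mul_assoc, adjugate_mul, Matrix.smul_mul, Matrix.one_mul, trace_smul,
      smul_eq_mul]
  rw [Matrix.mul_sub, trace_sub, hXM, hMX, sub_self]

theorem dotProduct_adjugate_mulVec_eq_trace_of_commutator {M X : Matrix ι ι R} {u v : ι → R}
    (h : X * M - M * X = 1 - vecMulVec u v) :
    v ⬝ᵥ adjugate M *ᵥ u = trace (adjugate M) := by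
  have h0 := trace_adjugate_mul_commutator M X
  rw [h, Matrix.mul_sub, Matrix.mul_one, trace_sub, mul_vecMulVec, trace_vecMulVec,
    sub_eq_zero] at h0
  rw [dotProduct_comm, h0]

end Matrix

theorem diagonal_mul_laxMatrix_sub_laxMatrix_mul_diagonal {n : ℕ} {x : Fin n → ℝ}
    (hx : Function.Injective x) (p : Fin n → ℝ) :
    diagonal x * laxMatrix x p - laxMatrix x p * diagonal x = vecMulVec 1 1 - 1 := by
  ext i j
  rcases eq_or_ne i j with rfl | hij
  · simp [laxMatrix, mul_comm]
  · have hxij : x i - x j ≠ 0 := sub_ne_zero.mpr (hx.ne hij)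
    simp only [Matrix.sub_apply, diagonal_mul, mul_diagonal, laxMatrix, of_apply, if_neg hij,
      vecMulVec_apply, Pi.one_apply, Matrix.one_apply_ne hij]
    field_simp
    ring

theorem sum_entries_adjugate_eq_trace_general {n : ℕ} (x p : Fin n → ℝ)
    (hx : Function.Injective x) (lam : ℝ) :
    (fun _ => (1 : ℝ)) ⬝ᵥ
        ((lam • (1 : Matrix (Fin n) (Fin n) ℝ) - laxMatrix x p).adjugate.mulVec
          (fun _ => (1 : ℝ)))
      = (lam • (1 : Matrix (Fin n) (Fin n) ℝ) - laxMatrix x p).adjugate.trace := by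
  apply dotProduct_adjugate_mulVec_eq_trace_of_commutator (X := diagonal x)
  have hL := diagonal_mul_laxMatrix_sub_laxMatrix_mul_diagonal hx p
  rw [Matrix.mul_sub, Matrix.sub_mul, Matrix.mul_smul, Matrix.smul_mul, Matrix.mul_one,
    Matrix.one_mul, sub_sub_sub_cancel_left, ← neg_sub, hL, neg_sub]
  rfl

/-- For the Calogero–Moser Lax matrix `L`, the sum of all the entries of
`adjugate(λ·Id − L)` (i.e. `eᵀ · adjugate(λ·Id − L) · e` for the all-ones vector `e`)
equals its trace. -/
theorem sum_entries_adjugate_eq_trace {n : ℕ} (hn : 1 ≤ n) (x p : Fin n → ℝ)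
    (hx : Function.Injective x) (lam : ℝ) :
    (fun _ => (1 : ℝ)) ⬝ᵥ
        ((lam • (1 : Matrix (Fin n) (Fin n) ℝ) - laxMatrix x p).adjugate.mulVec
          (fun _ => (1 : ℝ)))
      = (lam • (1 : Matrix (Fin n) (Fin n) ℝ) - laxMatrix x p).adjugate.trace :=
  sum_entries_adjugate_eq_trace_general x p hx lam
end

section
/- Identify T*gl(n,ℝ) with pairs (A,B) of n×n real matrices and let {·,·}_0 be the canonical Poisson bracket defined via matrix gradients. For k ≥ 1 set J_k(A,B) = trace(A^{k−1}·B). Then for all k,ℓ ≥ 1 with k+ℓ ≥ 3 and all (A,B): {J_k, J_ℓ}_0(A,B) = (ℓ−k)·J_{k+ℓ−2}(A,B), where the right-hand side means the (ℓ−k)-fold integer multiple of J_{k+ℓ−2}(A,B). -/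
open Matrix

attribute [local instance] Matrix.normedAddCommGroup Matrix.normedSpace

variable {n : ℕ}

/-- The continuous linear functional `(Ȧ, Ḃ) ↦ trace(GA·Ȧ) + trace(GB·Ḃ)` on
`T*gl(n,ℝ) = gl(n,ℝ) × gl(n,ℝ)`. -/
noncomputable def tracePairing (GA GB : Matrix (Fin n) (Fin n) ℝ) :
    Matrix (Fin n) (Fin n) ℝ × Matrix (Fin n) (Fin n) ℝ →L[ℝ] ℝ :=
  LinearMap.toContinuousLinearMap
    { toFun := fun P => (GA * P.1).trace + (GB * P.2).trace
      map_add' := by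
        intro P Q
        simp [Matrix.mul_add, Matrix.trace_add]
        ring
      map_smul' := by
        intro c P
        simp [Matrix.mul_smul, Matrix.trace_smul]
        ring }

/-- `F` has matrix gradients `(GA, GB)` at `(A,B)`: the Fréchet derivative of `F`
at `(A,B)` is `(Ȧ, Ḃ) ↦ trace(GA·Ȧ) + trace(GB·Ḃ)`. -/
def HasMatrixGradAt (F : Matrix (Fin n) (Fin n) ℝ × Matrix (Fin n) (Fin n) ℝ → ℝ)
    (P : Matrix (Fin n) (Fin n) ℝ × Matrix (Fin n) (Fin n) ℝ)
    (GA GB : Matrix (Fin n) (Fin n) ℝ) : Prop :=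
  HasFDerivAt F (tracePairing GA GB) P

/-- `I_k(A,B) = (1/k)·trace(Aᵏ)`. -/
noncomputable def Ifun (n k : ℕ) (P : Matrix (Fin n) (Fin n) ℝ × Matrix (Fin n) (Fin n) ℝ) : ℝ :=
  (1 / (k : ℝ)) * (P.1 ^ k).trace

/-- `J_k(A,B) = trace(A^{k-1}·B)`. -/
noncomputable def Jfun (n k : ℕ) (P : Matrix (Fin n) (Fin n) ℝ × Matrix (Fin n) (Fin n) ℝ) : ℝ :=
  (P.1 ^ (k - 1) * P.2).trace

/-
The gradients of `J_{m+1}(A,B) = trace(A^m B)` are `∇_B = A^m` and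
`∇_A = ∑_{i<m} A^i B A^(m-1-i)`: the product rule for `A ↦ A^m`, followed by cyclicity of the
trace. They are unique because the trace pairing is nondegenerate. By cyclicity once more, each of
the `ℓ-1` terms of `trace(∇_B J_k · ∇_A J_ℓ)` equals `J_{k+ℓ-2}`, and likewise each of the `k-1`
terms of `trace(∇_A J_k · ∇_B J_ℓ)`.
-/

section TracialPowMul

variable {𝕜 𝔸 : Type*} [NontriviallyNormedField 𝕜] [NormedRing 𝔸] [NormedAlgebra 𝕜 𝔸]

theorem hasFDerivAt_tracial_pow_mul (τ : 𝔸 →L[𝕜] 𝕜) (hτ : ∀ x y, τ (x * y) = τ (y * x))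
    (m : ℕ) (a b : 𝔸) {L : 𝔸 × 𝔸 →L[𝕜] 𝕜}
    (hL : ∀ x y, L (x, y) = τ ((∑ i ∈ Finset.range m, a ^ i * b * a ^ (m - 1 - i)) * x)
      + τ (a ^ m * y)) :
    HasFDerivAt (fun p : 𝔸 × 𝔸 => τ (p.1 ^ m * p.2)) L (a, b) := by
  have hmul := (hasFDerivAt_fst (p := (a, b)) (𝕜 := 𝕜)).fun_pow' m |>.mul' hasFDerivAt_snd
  refine (τ.hasFDerivAt.comp (a, b) hmul).congr_fderiv (ContinuousLinearMap.ext fun ⟨x, y⟩ => ?_)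
  simp only [hL, ContinuousLinearMap.comp_apply, _root_.add_apply, _root_.smul_apply,
    _root_.sum_apply, ContinuousLinearMap.coe_fst', ContinuousLinearMap.coe_snd', op_smul_eq_mul,
    smul_eq_mul, map_add, Finset.sum_mul, map_sum, Nat.pred_eq_sub_one, add_comm (τ (a ^ m * y))]
  congr 1
  exact Finset.sum_congr rfl fun i _ => by rw [mul_assoc _ (a ^ i), hτ, ← mul_assoc]

end TracialPowMul

section TracePowers

variable {ι R : Type*} [Fintype ι] [DecidableEq ι] [CommRing R] (A B : Matrix ι ι R)

theorem trace_pow_mul_mul_pow (i j : ℕ) : (A ^ i * B * A ^ j).trace = (A ^ (i + j) * B).trace := by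
  rw [trace_mul_comm, ← mul_assoc, ← pow_add, add_comm]

theorem trace_pow_mul_sum_pow_mul_mul_pow (p q : ℕ) :
    (A ^ p * ∑ i ∈ Finset.range q, A ^ i * B * A ^ (q - 1 - i)).trace
      = q * (A ^ (p + q - 1) * B).trace := by
  calc _ = ∑ i ∈ Finset.range q, (A ^ (p + q - 1) * B).trace := by
        rw [Finset.mul_sum, trace_sum]
        refine Finset.sum_congr rfl fun i hi => ?_
        rw [← mul_assoc, ← mul_assoc, ← pow_add, trace_pow_mul_mul_pow]
        have := Finset.mem_range.1 hi
        congr 3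
        omega
    _ = q * (A ^ (p + q - 1) * B).trace := by
        rw [Finset.sum_const, Finset.card_range, nsmul_eq_mul]

theorem trace_sum_pow_mul_mul_pow_mul_pow (p q : ℕ) :
    ((∑ i ∈ Finset.range q, A ^ i * B * A ^ (q - 1 - i)) * A ^ p).trace
      = q * (A ^ (p + q - 1) * B).trace := by
  rw [trace_mul_comm, trace_pow_mul_sum_pow_mul_mul_pow]

end TracePowers

local notation "M" => Matrix (Fin n) (Fin n) ℝ

theorem tracePairing_apply (GA GB : M) (P : M × M) :
    tracePairing GA GB P = (GA * P.1).trace + (GB * P.2).trace := rfl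

theorem tracePairing_inj {GA GB GA' GB' : M} :
    tracePairing GA GB = tracePairing GA' GB' ↔ GA = GA' ∧ GB = GB' := by
  refine ⟨fun h => ?_, fun ⟨hA, hB⟩ => hA ▸ hB ▸ rfl⟩
  have h' (X Y : M) : (GA * X).trace + (GB * Y).trace = (GA' * X).trace + (GB' * Y).trace := by
    simpa only [tracePairing_apply] using DFunLike.congr_fun h (X, Y)
  refine ⟨ext_iff_trace_mul_right.2 fun X => ?_, ext_iff_trace_mul_right.2 fun Y => ?_⟩
  · simpa only [Matrix.mul_zero, trace_zero, add_zero] using h' X 0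
  · simpa only [Matrix.mul_zero, trace_zero, zero_add] using h' 0 Y

theorem HasMatrixGradAt.unique {F : M × M → ℝ} {P : M × M} {GA GB GA' GB' : M}
    (h : HasMatrixGradAt F P GA GB) (h' : HasMatrixGradAt F P GA' GB') :
    GA = GA' ∧ GB = GB' :=
  tracePairing_inj.1 (HasFDerivAt.unique (f := F) h h')

theorem hasMatrixGradAt_Jfun (m : ℕ) (A B : M) :
    HasMatrixGradAt (Jfun n (m + 1)) (A, B)
      (∑ i ∈ Finset.range m, A ^ i * B * A ^ (m - 1 - i)) (A ^ m) := by
  -- `HasFDerivAt` only sees the topology, and every matrix norm induces the product topology.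
  let := Matrix.linftyOpNormedRing (n := Fin n) (α := ℝ)
  let := Matrix.linftyOpNormedAlgebra (n := Fin n) (α := ℝ) (R := ℝ)
  exact hasFDerivAt_tracial_pow_mul (LinearMap.toContinuousLinearMap (traceLinearMap (Fin n) ℝ ℝ))
    trace_mul_comm m A B fun _ _ => rfl

theorem canonical_brackets_JJ_general (k ℓ : ℕ) (hk : 1 ≤ k) (hl : 1 ≤ ℓ)
    (A B JkA JkB JlA JlB : Matrix (Fin n) (Fin n) ℝ)
    (hJk : HasMatrixGradAt (Jfun n k) (A, B) JkA JkB)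
    (hJl : HasMatrixGradAt (Jfun n ℓ) (A, B) JlA JlB) :
    (JkB * JlA).trace - (JkA * JlB).trace
      = ((ℓ : ℤ) - (k : ℤ)) • Jfun n (k + ℓ - 2) (A, B) := by
  obtain ⟨k, rfl⟩ := Nat.exists_eq_add_of_le' hk
  obtain ⟨ℓ, rfl⟩ := Nat.exists_eq_add_of_le' hl
  obtain ⟨rfl, rfl⟩ := hJk.unique (hasMatrixGradAt_Jfun k A B)
  obtain ⟨rfl, rfl⟩ := hJl.unique (hasMatrixGradAt_Jfun ℓ A B)
  rw [trace_pow_mul_sum_pow_mul_mul_pow, trace_sum_pow_mul_mul_pow_mul_pow, Jfun,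
    show k + 1 + (ℓ + 1) - 2 - 1 = k + ℓ - 1 by omega, add_comm ℓ k, zsmul_eq_mul]
  push_cast
  ring

/-- Canonical Poisson bracket of the invariants `J_k` on `T*gl(n,ℝ)`:
`{J_k, J_ℓ}₀ = (ℓ−k)·J_{k+ℓ−2}` for `k+ℓ ≥ 3`, where
`{F,G}₀ = trace(∇_B F·∇_A G) − trace(∇_A F·∇_B G)`. -/
theorem canonical_brackets_JJ (hn : 1 ≤ n) (k ℓ : ℕ) (hk : 1 ≤ k) (hl : 1 ≤ ℓ)
    (hkl : 3 ≤ k + ℓ) (A B JkA JkB JlA JlB : Matrix (Fin n) (Fin n) ℝ)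
    (hJk : HasMatrixGradAt (Jfun n k) (A, B) JkA JkB)
    (hJl : HasMatrixGradAt (Jfun n ℓ) (A, B) JlA JlB) :
    (JkB * JlA).trace - (JkA * JlB).trace
      = ((ℓ : ℤ) - (k : ℤ)) • Jfun n (k + ℓ - 2) (A, B) :=
  canonical_brackets_JJ_general k ℓ hk hl A B JkA JkB JlA JlB hJk hJl
end

section
/- Identify T*gl(n,ℝ) with pairs (A,B) of n×n real matrices and let {·,·}_1 be the Lie–Poisson bracket of the semidirect product Lie algebra gl(n)⋉gl(n), defined via matrix gradients. For k ≥ 1 set I_k(A,B) = (1/k)·trace(A^k) and J_k(A,B) = trace(A^{k−1}·B). Then for all k,ℓ ≥ 1 and all (A,B): {I_k, I_ℓ}_1 = 0 and {J_ℓ, I_k}_1(A,B) = (k+ℓ−1)·I_{k+ℓ−1}(A,B). -/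
open Matrix

attribute [local instance] Matrix.normedAddCommGroup Matrix.normedSpace

variable {n : ℕ}

/-!
The trace pairing is nondegenerate, so matrix gradients are unique and can be read off from
partial derivatives: `∇I_k = (A^{k-1}, 0)` since `d trace(Aᵏ) = k·trace(A^{k-1}·Ȧ)`, and
`∇_B J_ℓ = A^{ℓ-1}` since `J_ℓ` is linear in `B`. With `∇_B I_k = 0`, the bracket
`{I_k, I_ℓ}₁` vanishes term by term and `{J_ℓ, I_k}₁` collapses to
`trace(A·A^{ℓ-1}·A^{k-1}) = trace(A^{k+ℓ-1})`.
-/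

section TraceForm

variable {m 𝕜 : Type*} [Fintype m] [NontriviallyNormedField 𝕜] [CompleteSpace 𝕜]

noncomputable def traceMulCLM (G : Matrix m m 𝕜) : Matrix m m 𝕜 →L[𝕜] 𝕜 :=
  LinearMap.toContinuousLinearMap ((traceLinearMap m 𝕜 𝕜).comp (LinearMap.mulLeft 𝕜 G))

@[simp]
lemma traceMulCLM_apply (G E : Matrix m m 𝕜) : traceMulCLM G E = (G * E).trace := rfl

@[simp]
lemma traceMulCLM_zero : traceMulCLM (0 : Matrix m m 𝕜) = 0 := by
  ext E
  simp

lemma traceMulCLM_injective : Function.Injective (traceMulCLM : Matrix m m 𝕜 → _) :=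
  fun _ _ h => ext_iff_trace_mul_right.mpr (DFunLike.congr_fun h)

open scoped RightActions in
/-- `HasFDerivAt` only sees the topology of the matrix space, which the sup norm shares with the
submultiplicative `L∞`-operator norm; so the normed-ring formula for `d(Xᵏ)` applies. -/
lemma hasFDerivAt_trace_pow [DecidableEq m] (k : ℕ) (A : Matrix m m 𝕜) :
    HasFDerivAt (fun X : Matrix m m 𝕜 => (X ^ k).trace)
      ((k : 𝕜) • traceMulCLM (A ^ (k - 1))) A := by
  have hpow : HasFDerivAt (fun X : Matrix m m 𝕜 => X ^ k)
      (∑ i ∈ Finset.range k,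
        A ^ (k.pred - i) •> ContinuousLinearMap.id 𝕜 (Matrix m m 𝕜) <• A ^ i) A := by
    let := Matrix.linftyOpNormedRing (n := m) (α := 𝕜)
    let := Matrix.linftyOpNormedAlgebra (n := m) (α := 𝕜) (R := 𝕜)
    exact hasFDerivAt_pow' k
  refine ((traceLinearMap m 𝕜 𝕜).toContinuousLinearMap.hasFDerivAt.comp A hpow).congr_fderiv
    ?_
  ext E
  change ((∑ i ∈ Finset.range k,
      A ^ (k.pred - i) •> ContinuousLinearMap.id 𝕜 (Matrix m m 𝕜) <• A ^ i) E).trace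
    = (k : 𝕜) * (A ^ (k - 1) * E).trace
  have hterm : ∀ i ∈ Finset.range k,
      (A ^ (k.pred - i) * E * A ^ i).trace = (A ^ (k - 1) * E).trace := by
    intro i hi
    rw [trace_mul_cycle, ← pow_add, Nat.pred_eq_sub_one,
      Nat.add_sub_cancel' (Nat.le_sub_one_of_lt (Finset.mem_range.mp hi))]
  simp only [_root_.sum_apply, _root_.smul_apply, ContinuousLinearMap.id_apply,
    MulOpposite.smul_eq_mul_unop, MulOpposite.unop_op, smul_eq_mul, trace_sum]
  rw [Finset.sum_congr rfl hterm]
  simp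

end TraceForm

lemma tracePairing_comp_inl (GA GB : Matrix (Fin n) (Fin n) ℝ) :
    (tracePairing GA GB).comp (.inl ℝ _ _) = traceMulCLM GA := by
  ext E
  simp [tracePairing]

lemma tracePairing_comp_inr (GA GB : Matrix (Fin n) (Fin n) ℝ) :
    (tracePairing GA GB).comp (.inr ℝ _ _) = traceMulCLM GB := by
  ext E
  simp [tracePairing]

namespace HasMatrixGradAt

variable {F : Matrix (Fin n) (Fin n) ℝ × Matrix (Fin n) (Fin n) ℝ → ℝ}
  {A B GA GB G : Matrix (Fin n) (Fin n) ℝ}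

lemma hasFDerivAt {P : Matrix (Fin n) (Fin n) ℝ × Matrix (Fin n) (Fin n) ℝ}
    (h : HasMatrixGradAt F P GA GB) : HasFDerivAt F (tracePairing GA GB) P :=
  h

lemma hasFDerivAt_fst (h : HasMatrixGradAt F (A, B) GA GB) :
    HasFDerivAt (fun X => F (X, B)) (traceMulCLM GA) A :=
  (h.hasFDerivAt.comp A (hasFDerivAt_prodMk_left A B)).congr_fderiv (tracePairing_comp_inl GA GB)

lemma hasFDerivAt_snd (h : HasMatrixGradAt F (A, B) GA GB) :
    HasFDerivAt (fun Y => F (A, Y)) (traceMulCLM GB) B :=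
  (h.hasFDerivAt.comp B (hasFDerivAt_prodMk_right A B)).congr_fderiv (tracePairing_comp_inr GA GB)

lemma fst_eq (h : HasMatrixGradAt F (A, B) GA GB)
    (hG : HasFDerivAt (fun X => F (X, B)) (traceMulCLM G) A) : GA = G :=
  traceMulCLM_injective (h.hasFDerivAt_fst.unique hG)

lemma snd_eq (h : HasMatrixGradAt F (A, B) GA GB)
    (hG : HasFDerivAt (fun Y => F (A, Y)) (traceMulCLM G) B) : GB = G :=
  traceMulCLM_injective (h.hasFDerivAt_snd.unique hG)

lemma Ifun_eq {k : ℕ} (hk : k ≠ 0) (h : HasMatrixGradAt (Ifun n k) (A, B) GA GB) :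
    GA = A ^ (k - 1) ∧ GB = 0 := by
  refine ⟨h.fst_eq ?_, h.snd_eq ?_⟩
  · have hI : HasFDerivAt (fun X => Ifun n k (X, B))
        ((1 / (k : ℝ)) • (k : ℝ) • traceMulCLM (A ^ (k - 1))) A :=
      (hasFDerivAt_trace_pow k A).const_mul _
    rwa [smul_smul, one_div_mul_cancel (Nat.cast_ne_zero.mpr hk), one_smul] at hI
  · exact (hasFDerivAt_const (Ifun n k (A, B)) B).congr_fderiv traceMulCLM_zero.symm

lemma Jfun_snd_eq {l : ℕ} (h : HasMatrixGradAt (Jfun n l) (A, B) GA GB) : GB = A ^ (l - 1) :=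
  h.snd_eq (traceMulCLM (A ^ (l - 1))).hasFDerivAt

end HasMatrixGradAt

lemma natCast_mul_Ifun {m : ℕ} (hm : m ≠ 0)
    (P : Matrix (Fin n) (Fin n) ℝ × Matrix (Fin n) (Fin n) ℝ) :
    (m : ℝ) * Ifun n m P = (P.1 ^ m).trace := by
  rw [Ifun, ← mul_assoc, mul_one_div_cancel (Nat.cast_ne_zero.mpr hm), one_mul]

theorem lie_poisson_brackets_IJ_general (k ℓ : ℕ) (hk : 1 ≤ k) (hl : 1 ≤ ℓ)
    (A B IkA IkB IlA IlB JlA JlB : Matrix (Fin n) (Fin n) ℝ)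
    (hIk : HasMatrixGradAt (Ifun n k) (A, B) IkA IkB)
    (hIl : HasMatrixGradAt (Ifun n ℓ) (A, B) IlA IlB)
    (hJl : HasMatrixGradAt (Jfun n ℓ) (A, B) JlA JlB) :
    ((A * (IkB * IlA - IlB * IkA)).trace + (B * (IkB * IlB - IlB * IkB)).trace = 0)
    ∧ ((A * (JlB * IkA - IkB * JlA)).trace + (B * (JlB * IkB - IkB * JlB)).trace
        = ((k + ℓ - 1 : ℕ) : ℝ) * Ifun n (k + ℓ - 1) (A, B)) := by
  obtain ⟨rfl, rfl⟩ := hIk.Ifun_eq (by omega)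
  obtain ⟨rfl, rfl⟩ := hIl.Ifun_eq (by omega)
  obtain rfl := hJl.Jfun_snd_eq
  refine ⟨by simp, ?_⟩
  have hpow : A * (A ^ (ℓ - 1) * A ^ (k - 1)) = A ^ (k + ℓ - 1) := by
    rw [← Matrix.mul_assoc, ← pow_succ', ← pow_add]
    congr 1
    omega
  simp [hpow, natCast_mul_Ifun (show k + ℓ - 1 ≠ 0 by omega)]

/-- Lie–Poisson brackets (for the semidirect product `gl(n)⋉gl(n)`) of the invariants
`I_k`, `J_k` on `T*gl(n,ℝ)`: `{I_k, I_ℓ}₁ = 0` and `{J_ℓ, I_k}₁ = (k+ℓ−1)·I_{k+ℓ−1}`, where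
`{F,G}₁ = trace(A·(∇_B F·∇_A G − ∇_B G·∇_A F)) + trace(B·(∇_B F·∇_B G − ∇_B G·∇_B F))`. -/
theorem lie_poisson_brackets_IJ (hn : 1 ≤ n) (k ℓ : ℕ) (hk : 1 ≤ k) (hl : 1 ≤ ℓ)
    (A B IkA IkB IlA IlB JlA JlB : Matrix (Fin n) (Fin n) ℝ)
    (hIk : HasMatrixGradAt (Ifun n k) (A, B) IkA IkB)
    (hIl : HasMatrixGradAt (Ifun n ℓ) (A, B) IlA IlB)
    (hJl : HasMatrixGradAt (Jfun n ℓ) (A, B) JlA JlB) :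
    ((A * (IkB * IlA - IlB * IkA)).trace + (B * (IkB * IlB - IlB * IkB)).trace = 0)
    ∧ ((A * (JlB * IkA - IkB * JlA)).trace + (B * (JlB * IkB - IkB * JlB)).trace
        = ((k + ℓ - 1 : ℕ) : ℝ) * Ifun n (k + ℓ - 1) (A, B)) :=
  lie_poisson_brackets_IJ_general k ℓ hk hl A B IkA IkB IlA IlB JlA JlB hIk hIl hJl
end

section
/- Let n ≥ 1 and let U ⊆ ℝ^n × ℝ^n be the open set of pairs (x,p) with the x_i pairwise distinct. Then the spectral invariants of the Calogero–Moser Lax matrix are in involution: for all k, ℓ ≥ 1 and all (x,p) ∈ U, the canonical Poisson bracket satisfies {trace(L^k), trace(L^ℓ)}(x,p) = 0. In particular, the rational Calogero–Moser Hamiltonian H = (1/2)·trace(L^2) admits the n functionally independent commuting integrals I_k = (1/k)·trace(L^k). -/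
/-!
Write `L = diag p + K` with `K a b = 1 / (x a - x b)` off the diagonal. The Poisson bracket
`{F, G}` is the derivative of `F` along the Hamiltonian vector field of `G`, and for
`G = tr (L ^ ℓ)` that field moves `L` by `ℓ • (M L - L M)`, where `B = L ^ (ℓ - 1)` and
`M = K ⊙ B - diag (∑ c, K a c * B a c)` (a Lax pair). The off-diagonal entries of this
Lax equation come from the three-term identity `K a c * K c b = K a b * (K a c + K c b)` for
distinct `a, b, c`, together with `B L = L B`. Hence
`{tr (L ^ k), tr (L ^ ℓ)} = k ℓ tr (L ^ (k - 1) (M L - L M)) = 0`, by cyclicity of the trace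
and `L ^ (k - 1) L = L L ^ (k - 1)`.
-/

open Matrix

/-- The canonical Poisson bracket on `ℝⁿ × ℝⁿ` (positions `x = z.1`, momenta `p = z.2`):
`{F,G}(x,p) = ∑ i (∂F/∂xᵢ·∂G/∂pᵢ − ∂F/∂pᵢ·∂G/∂xᵢ)`. -/
noncomputable def poissonBracket {n : ℕ} (F G : (Fin n → ℝ) × (Fin n → ℝ) → ℝ)
    (z : (Fin n → ℝ) × (Fin n → ℝ)) : ℝ :=
  ∑ i : Fin n,
    (fderiv ℝ F z (Pi.single i 1, 0) * fderiv ℝ G z (0, Pi.single i 1)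
      - fderiv ℝ F z (0, Pi.single i 1) * fderiv ℝ G z (Pi.single i 1, 0))

open Finset

section Trace

variable {ι R : Type*} [Fintype ι] [CommRing R]

theorem trace_mul_commutator_eq_zero {A L : Matrix ι ι R} (hA : Commute A L) (M : Matrix ι ι R) :
    trace (A * (M * L - L * M)) = 0 := by
  rw [mul_sub, trace_sub, ← mul_assoc, trace_mul_comm (A * M), ← mul_assoc, ← hA.eq, mul_assoc,
    sub_self]

variable [DecidableEq ι]

theorem trace_sum_pow_mul_mul_pow (A X : Matrix ι ι R) (m : ℕ) :
    ∑ i ∈ range m, trace (A ^ (m.pred - i) * X * A ^ i) = m * trace (A ^ (m - 1) * X) := by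
  rw [← card_range m, ← nsmul_eq_mul, ← sum_const, card_range]
  refine sum_congr rfl fun i hi => ?_
  rw [trace_mul_comm, ← mul_assoc, ← pow_add, Nat.pred_eq_sub_one,
    Nat.add_sub_of_le (Nat.le_sub_one_of_lt (mem_range.1 hi))]

end Trace

section MatrixCalculus

open scoped RightActions

-- Any submultiplicative norm would do: derivatives only see the (unique) topology.
attribute [local instance] Matrix.linftyOpNormedRing Matrix.linftyOpNormedAlgebra

variable {ι E : Type*} [Fintype ι] [DecidableEq ι] [NormedAddCommGroup E] [NormedSpace ℝ E]
  {f : E → Matrix ι ι ℝ} {f' : E →L[ℝ] Matrix ι ι ℝ} {z : E}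

theorem hasFDerivAt_matrix_of_entries {g' : ι → ι → E →L[ℝ] ℝ}
    (h : ∀ a b, HasFDerivAt (fun w => f w a b) (g' a b) z) (hf' : ∀ v a b, f' v a b = g' a b v) :
    HasFDerivAt f f' z := by
  let e : Matrix ι ι ℝ ≃L[ℝ] (ι → ι → ℝ) := (Matrix.ofLinearEquiv ℝ).symm.toContinuousLinearEquiv
  refine e.comp_hasFDerivAt_iff.1 ?_
  refine hasFDerivAt_pi'' fun a => hasFDerivAt_pi'' fun b => ?_
  exact (h a b).congr_fderiv (ContinuousLinearMap.ext fun v => (hf' v a b).symm)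

theorem HasFDerivAt.trace_pow (hf : HasFDerivAt f f' z) (m : ℕ) :
    HasFDerivAt (fun w => (f w ^ m).trace) ((traceLinearMap ι ℝ ℝ).toContinuousLinearMap ∘L
      ∑ i ∈ range m, f z ^ (m.pred - i) •> f' <• f z ^ i) z :=
  (traceLinearMap ι ℝ ℝ).toContinuousLinearMap.hasFDerivAt.comp z (hf.fun_pow' m)

theorem HasFDerivAt.fderiv_trace_pow_apply (hf : HasFDerivAt f f' z) (m : ℕ) (v : E) :
    fderiv ℝ (fun w => (f w ^ m).trace) z v = m * (f z ^ (m - 1) * f' v).trace := by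
  rw [(hf.trace_pow m).fderiv]
  simp only [ContinuousLinearMap.comp_apply, LinearMap.coe_toContinuousLinearMap',
    traceLinearMap_apply, FunLike.coe_sum, Finset.sum_apply, _root_.smul_apply, trace_sum,
    smul_eq_mul, MulOpposite.smul_eq_mul_unop, MulOpposite.unop_op]
  exact trace_sum_pow_mul_mul_pow _ _ m

end MatrixCalculus

section PoissonBracket

variable {n : ℕ}

noncomputable def hamiltonianVectorField (G : (Fin n → ℝ) × (Fin n → ℝ) → ℝ)
    (z : (Fin n → ℝ) × (Fin n → ℝ)) : (Fin n → ℝ) × (Fin n → ℝ) :=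
  (fun i => fderiv ℝ G z (0, Pi.single i 1), fun i => -fderiv ℝ G z (Pi.single i 1, 0))

theorem ContinuousLinearMap.apply_eq_sum_single
    (φ : ((Fin n → ℝ) × (Fin n → ℝ)) →L[ℝ] ℝ) (v : (Fin n → ℝ) × (Fin n → ℝ)) :
    φ v = ∑ i, (v.1 i * φ (Pi.single i 1, 0) + v.2 i * φ (0, Pi.single i 1)) := by
  have hv : v = ∑ i, (v.1 i • (Pi.single i 1, 0) + v.2 i • (0, Pi.single i 1)) := by
    ext j <;> simp [Prod.fst_sum, Prod.snd_sum, Finset.sum_apply, Pi.single_apply]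
  conv_lhs => rw [hv]
  simp only [map_sum, map_add, map_smul, smul_eq_mul]

theorem poissonBracket_eq_fderiv_hamiltonianVectorField
    (F G : (Fin n → ℝ) × (Fin n → ℝ) → ℝ) (z : (Fin n → ℝ) × (Fin n → ℝ)) :
    poissonBracket F G z = fderiv ℝ F z (hamiltonianVectorField G z) := by
  rw [(fderiv ℝ F z).apply_eq_sum_single, poissonBracket]
  refine sum_congr rfl fun i _ => ?_
  simp only [hamiltonianVectorField]
  ring

theorem hamiltonianVectorField_eq_of_fderiv {G : (Fin n → ℝ) × (Fin n → ℝ) → ℝ}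
    {z : (Fin n → ℝ) × (Fin n → ℝ)} {X : (Fin n → ℝ) × (Fin n → ℝ)}
    (hG : ∀ v, fderiv ℝ G z v = ∑ a, (v.2 a * X.1 a - v.1 a * X.2 a)) :
    hamiltonianVectorField G z = X := by
  ext i <;> simp [hamiltonianVectorField, hG, Pi.single_apply]

theorem poissonBracket_const_mul {F G : (Fin n → ℝ) × (Fin n → ℝ) → ℝ}
    {z : (Fin n → ℝ) × (Fin n → ℝ)} (hF : DifferentiableAt ℝ F z)
    (hG : DifferentiableAt ℝ G z) (c d : ℝ) :
    poissonBracket (fun w => c * F w) (fun w => d * G w) z = c * d * poissonBracket F G z := by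
  simp only [poissonBracket, fderiv_const_mul hF, fderiv_const_mul hG,
    _root_.smul_apply, smul_eq_mul, mul_sum]
  refine sum_congr rfl fun i _ => ?_
  ring

end PoissonBracket

namespace CalogeroMoser

variable {n : ℕ} (x : Fin n → ℝ)

noncomputable def interactionMatrix : Matrix (Fin n) (Fin n) ℝ :=
  Matrix.of fun a b => if a = b then 0 else (x a - x b)⁻¹

local notation "K" => interactionMatrix x

@[simp]
theorem interactionMatrix_apply_self (a : Fin n) : K a a = 0 := by
  simp [interactionMatrix]

theorem interactionMatrix_apply_swap (a b : Fin n) : K b a = -K a b := by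
  rcases eq_or_ne a b with rfl | hab
  · simp
  · simp [interactionMatrix, hab, Ne.symm hab, ← inv_neg]

theorem laxMatrix_eq_diagonal_add (p : Fin n → ℝ) : laxMatrix x p = diagonal p + K := by
  ext a b
  rcases eq_or_ne a b with rfl | hab <;> simp [laxMatrix, interactionMatrix, diagonal, *]

variable {x}

theorem interactionMatrix_apply_mul_apply (hx : Function.Injective x) {a b c : Fin n}
    (hab : a ≠ b) (hca : c ≠ a) (hcb : c ≠ b) :
    K a c * K c b = K a b * (K a c + K c b) := by
  have h1 : x a - x b ≠ 0 := sub_ne_zero.2 (hx.ne hab)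
  have h2 : x a - x c ≠ 0 := sub_ne_zero.2 (hx.ne (Ne.symm hca))
  have h3 : x c - x b ≠ 0 := sub_ne_zero.2 (hx.ne hcb)
  simp only [interactionMatrix, of_apply, if_neg hab, if_neg (Ne.symm hca), if_neg hcb]
  field_simp
  ring

theorem sum_interactionMatrix_apply_mul_apply (hx : Function.Injective x) {a b : Fin n}
    (hab : a ≠ b) (u : Fin n → ℝ) :
    ∑ c, K a c * K c b * u c = K a b * ∑ c, (K a c + K c b) * u c - K a b ^ 2 * (u a + u b) := by
  -- The three-term identity fails only at `c = a` and `c = b`, where the left side vanishes.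
  have hterm : ∀ c, K a c * K c b * u c = K a b * ((K a c + K c b) * u c)
      - (if c = a then K a b ^ 2 * u a else 0) - (if c = b then K a b ^ 2 * u b else 0) := by
    intro c
    rcases eq_or_ne c a with rfl | hca
    · simp [hab]
      ring
    rcases eq_or_ne c b with rfl | hcb
    · simp [hca]
      ring
    rw [if_neg hca, if_neg hcb, interactionMatrix_apply_mul_apply hx hab hca hcb]
    ring
  simp only [hterm, sum_sub_distrib, ← mul_sum, sum_ite_eq', mem_univ, if_true]
  ring

variable (x) in
noncomputable def laxPartner (B : Matrix (Fin n) (Fin n) ℝ) : Matrix (Fin n) (Fin n) ℝ :=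
  K ⊙ B - diagonal fun a => ∑ c, K a c * B a c

variable {p : Fin n → ℝ} {B : Matrix (Fin n) (Fin n) ℝ}

theorem commutator_interactionMatrix_apply (hB : Commute B (laxMatrix x p)) (a b : Fin n) :
    (K * B - B * K) a b = (p b - p a) * B a b := by
  have h := congrFun (congrFun hB.eq a) b
  rw [laxMatrix_eq_diagonal_add, mul_add, add_mul, Matrix.add_apply, Matrix.add_apply, mul_diagonal,
    diagonal_mul] at h
  rw [Matrix.sub_apply]
  linear_combination -h

theorem sum_interactionMatrix_mul_add (hB : Commute B (laxMatrix x p)) (a : Fin n) :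
    ∑ c, K a c * (B c a + B a c) = 0 := by
  have h := commutator_interactionMatrix_apply hB a a
  rw [sub_self, zero_mul, Matrix.sub_apply, mul_apply, mul_apply, ← sum_sub_distrib] at h
  rw [← h]
  refine sum_congr rfl fun c _ => ?_
  rw [interactionMatrix_apply_swap x c a]
  ring

theorem laxPartner_commutator_apply_self (a : Fin n) :
    (laxPartner x B * laxMatrix x p - laxMatrix x p * laxPartner x B) a a =
      ∑ c, K a c ^ 2 * (B c a - B a c) := by
  have h : ∑ c, K a c * B a c * K c a - ∑ c, K a c * (K c a * B c a) =
      ∑ c, K a c ^ 2 * (B c a - B a c) := by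
    rw [← sum_sub_distrib]
    refine sum_congr rfl fun c _ => ?_
    rw [interactionMatrix_apply_swap x a c]
    ring
  conv_lhs =>
    simp only [laxMatrix_eq_diagonal_add, laxPartner, sub_mul, mul_sub, add_mul, mul_add,
      Matrix.sub_apply, Matrix.add_apply, mul_diagonal, diagonal_mul, diagonal_mul_diagonal,
      diagonal_apply_eq, hadamard_apply]
    simp only [mul_apply, hadamard_apply, interactionMatrix_apply_self]
  linear_combination h

theorem laxPartner_commutator_apply_of_ne (hx : Function.Injective x)
    (hB : Commute B (laxMatrix x p)) {a b : Fin n} (hab : a ≠ b) :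
    (laxPartner x B * laxMatrix x p - laxMatrix x p * laxPartner x B) a b =
      -(B a a - B b b) * K a b ^ 2 := by
  have hcomm := commutator_interactionMatrix_apply hB a b
  rw [Matrix.sub_apply, mul_apply, mul_apply] at hcomm
  have hcauchy := sum_interactionMatrix_apply_mul_apply hx hab fun c => B a c - B c b
  have hsplit : ∑ c, K a c * B a c * K c b - ∑ c, K a c * (K c b * B c b) =
      ∑ c, K a c * K c b * (B a c - B c b) := by
    rw [← sum_sub_distrib]
    exact sum_congr rfl fun c _ => by ring
  have hvanish : (∑ c, K a c * B c b - ∑ c, B a c * K c b) + ∑ c, (K a c + K c b) * (B a c - B c b)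
      - ∑ c, K a c * B a c + ∑ c, K b c * B b c = 0 := by
    rw [← sum_interactionMatrix_mul_add hB b]
    simp only [← sum_sub_distrib, ← sum_add_distrib]
    refine sum_congr rfl fun c _ => ?_
    rw [interactionMatrix_apply_swap x b c]
    ring
  simp only [laxMatrix_eq_diagonal_add, laxPartner, sub_mul, mul_sub, add_mul, mul_add,
    Matrix.sub_apply, Matrix.add_apply, mul_diagonal, diagonal_mul, diagonal_mul_diagonal,
    diagonal_apply_ne _ hab, hadamard_apply]
  simp only [mul_apply, hadamard_apply]
  linear_combination -K a b * hcomm + hsplit + hcauchy + K a b * hvanish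

variable (x) in
noncomputable def laxDerivative :
    ((Fin n → ℝ) × (Fin n → ℝ)) →L[ℝ] Matrix (Fin n) (Fin n) ℝ :=
  LinearMap.toContinuousLinearMap
    { toFun := fun v => Matrix.of fun a b =>
        if a = b then v.2 a else -(v.1 a - v.1 b) * K a b ^ 2
      map_add' := fun v w => by
        ext a b
        simp only [of_apply, Matrix.add_apply, Prod.fst_add, Prod.snd_add, Pi.add_apply]
        split_ifs <;> ring
      map_smul' := fun c v => by
        ext a b
        simp only [of_apply, Matrix.smul_apply, Prod.smul_fst, Prod.smul_snd, Pi.smul_apply,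
          smul_eq_mul, RingHom.id_apply]
        split_ifs <;> ring }

@[simp]
theorem laxDerivative_apply (v : (Fin n → ℝ) × (Fin n → ℝ)) (a b : Fin n) :
    laxDerivative x v a b = if a = b then v.2 a else -(v.1 a - v.1 b) * K a b ^ 2 :=
  rfl

variable (x) in
noncomputable def hamiltonianDirection (B : Matrix (Fin n) (Fin n) ℝ) :
    (Fin n → ℝ) × (Fin n → ℝ) :=
  (fun a => B a a, fun a => ∑ c, K a c ^ 2 * (B c a - B a c))

theorem trace_mul_laxDerivative (B : Matrix (Fin n) (Fin n) ℝ) (v : (Fin n → ℝ) × (Fin n → ℝ)) :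
    trace (B * laxDerivative x v) =
      ∑ a, (v.2 a * (hamiltonianDirection x B).1 a - v.1 a * (hamiltonianDirection x B).2 a) := by
  have hentry : ∀ a b, laxDerivative x v b a =
      (if b = a then v.2 a else 0) + (v.1 a - v.1 b) * K a b ^ 2 := by
    intro a b
    rcases eq_or_ne b a with rfl | hba
    · simp
    · simp [hba, interactionMatrix_apply_swap x a b]
  simp only [trace, Matrix.diag, mul_apply, hentry, mul_add, sum_add_distrib, mul_ite, mul_zero,
    sum_ite_eq', mem_univ, if_true, hamiltonianDirection]
  have hswap : ∑ a, ∑ c, B a c * (v.1 c * K a c ^ 2) = ∑ a, ∑ c, v.1 a * (K a c ^ 2 * B c a) := by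
    rw [sum_comm]
    refine sum_congr rfl fun a _ => sum_congr rfl fun c _ => ?_
    rw [interactionMatrix_apply_swap x a c, neg_sq]
    ring
  have hdiag : ∑ a, B a a * v.2 a = ∑ a, v.2 a * B a a := sum_congr rfl fun _ _ => mul_comm _ _
  have hdirect : ∑ a, ∑ c, B a c * (v.1 a * K a c ^ 2) = ∑ a, ∑ c, v.1 a * (K a c ^ 2 * B a c) :=
    sum_congr rfl fun _ _ => sum_congr rfl fun _ _ => by ring
  simp only [mul_sub, sub_mul, sum_sub_distrib, hswap, hdiag, hdirect, mul_sum]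
  ring

theorem laxDerivative_hamiltonianDirection (hx : Function.Injective x)
    (hB : Commute B (laxMatrix x p)) :
    laxDerivative x (hamiltonianDirection x B) =
      laxPartner x B * laxMatrix x p - laxMatrix x p * laxPartner x B := by
  ext a b
  rcases eq_or_ne a b with rfl | hab
  · rw [laxPartner_commutator_apply_self]
    simp [hamiltonianDirection]
  · simp [laxPartner_commutator_apply_of_ne hx hB hab, hab, hamiltonianDirection]

section Derivative

attribute [local instance] Matrix.linftyOpNormedRing Matrix.linftyOpNormedAlgebra

theorem hasFDerivAt_laxMatrix {z : (Fin n → ℝ) × (Fin n → ℝ)} (hz : Function.Injective z.1) :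
    HasFDerivAt (fun w => laxMatrix w.1 w.2) (laxDerivative z.1) z := by
  let coordX (a : Fin n) := (ContinuousLinearMap.proj a).comp
    (ContinuousLinearMap.fst ℝ (Fin n → ℝ) (Fin n → ℝ))
  let coordP (a : Fin n) := (ContinuousLinearMap.proj a).comp
    (ContinuousLinearMap.snd ℝ (Fin n → ℝ) (Fin n → ℝ))
  refine hasFDerivAt_matrix_of_entries (g' := fun a b => if a = b then coordP a
    else (-((z.1 a - z.1 b) ^ 2)⁻¹) • (coordX a - coordX b)) (fun a b => ?_) (fun v a b => ?_)
  · rcases eq_or_ne a b with rfl | hab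
    · simp only [laxMatrix, of_apply, if_true]
      exact (coordP a).hasFDerivAt
    · have hne : z.1 a - z.1 b ≠ 0 := sub_ne_zero.2 (hz.ne hab)
      simp only [laxMatrix, of_apply, if_neg hab, one_div]
      exact (hasDerivAt_inv hne).comp_hasFDerivAt z
        ((coordX a).hasFDerivAt.sub (coordX b).hasFDerivAt)
  · rcases eq_or_ne a b with rfl | hab
    · simp [coordP]
    · simp [interactionMatrix, hab, coordX]
      ring

theorem hamiltonianVectorField_trace_laxMatrix_pow {z : (Fin n → ℝ) × (Fin n → ℝ)}
    (hz : Function.Injective z.1) (m : ℕ) :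
    hamiltonianVectorField (fun w => trace (laxMatrix w.1 w.2 ^ m)) z =
      (m : ℝ) • hamiltonianDirection z.1 (laxMatrix z.1 z.2 ^ (m - 1)) := by
  refine hamiltonianVectorField_eq_of_fderiv fun v => ?_
  rw [(hasFDerivAt_laxMatrix hz).fderiv_trace_pow_apply, trace_mul_laxDerivative, mul_sum]
  refine sum_congr rfl fun a _ => ?_
  simp only [Prod.smul_fst, Prod.smul_snd, Pi.smul_apply, smul_eq_mul]
  ring

end Derivative

theorem poissonBracket_trace_laxMatrix_pow {z : (Fin n → ℝ) × (Fin n → ℝ)}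
    (hz : Function.Injective z.1) (k ℓ : ℕ) :
    poissonBracket (fun w => trace (laxMatrix w.1 w.2 ^ k))
      (fun w => trace (laxMatrix w.1 w.2 ^ ℓ)) z = 0 := by
  have hL := Commute.refl (laxMatrix z.1 z.2)
  rw [poissonBracket_eq_fderiv_hamiltonianVectorField,
    hamiltonianVectorField_trace_laxMatrix_pow hz,
    (hasFDerivAt_laxMatrix hz).fderiv_trace_pow_apply, map_smul,
    laxDerivative_hamiltonianDirection hz (hL.pow_left _), mul_smul_comm, trace_smul,
    trace_mul_commutator_eq_zero (hL.pow_left _), smul_zero, mul_zero]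

end CalogeroMoser

theorem spectral_invariants_in_involution_general {n : ℕ} (k ℓ : ℕ)
    (z : (Fin n → ℝ) × (Fin n → ℝ)) (hz : Function.Injective z.1) :
    poissonBracket (fun w => ((laxMatrix w.1 w.2) ^ k).trace)
        (fun w => ((laxMatrix w.1 w.2) ^ ℓ).trace) z = 0
    ∧ poissonBracket (fun w => (1 / 2 : ℝ) * ((laxMatrix w.1 w.2) ^ 2).trace)
        (fun w => (1 / (k : ℝ)) * ((laxMatrix w.1 w.2) ^ k).trace) z = 0 := by
  have hL := CalogeroMoser.hasFDerivAt_laxMatrix hz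
  have hdiff (m : ℕ) := (hL.trace_pow m).differentiableAt
  refine ⟨CalogeroMoser.poissonBracket_trace_laxMatrix_pow hz k ℓ, ?_⟩
  rw [poissonBracket_const_mul (hdiff 2) (hdiff k),
    CalogeroMoser.poissonBracket_trace_laxMatrix_pow hz, mul_zero]

/-- The spectral invariants of the Calogero–Moser Lax matrix are in involution:
`{trace(Lᵏ), trace(Lˡ)} = 0` on the open set of pairwise distinct positions; in
particular the Hamiltonian `H = (1/2)·trace(L²)` commutes with each integral
`I_k = (1/k)·trace(Lᵏ)`. -/
theorem spectral_invariants_in_involution {n : ℕ} (hn : 1 ≤ n) (k ℓ : ℕ)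
    (hk : 1 ≤ k) (hl : 1 ≤ ℓ)
    (z : (Fin n → ℝ) × (Fin n → ℝ)) (hz : Function.Injective z.1) :
    poissonBracket (fun w => ((laxMatrix w.1 w.2) ^ k).trace)
        (fun w => ((laxMatrix w.1 w.2) ^ ℓ).trace) z = 0
    ∧ poissonBracket (fun w => (1 / 2 : ℝ) * ((laxMatrix w.1 w.2) ^ 2).trace)
        (fun w => (1 / (k : ℝ)) * ((laxMatrix w.1 w.2) ^ k).trace) z = 0 :=
  spectral_invariants_in_involution_general k ℓ z hz
end

section
/- (Rank-one structure of the adjugate / eigenvector formula.) Let 𝕜 be a field, n ≥ 2, and let A be an n×n matrix over 𝕜 whose rank equals n−1. Then there exist nonzero vectors ψ, φ ∈ 𝕜^n with A·ψ = 0 (ψ spans the kernel of A) and φᵀ·A = 0 (φ spans the left kernel of A) such that adjugate(A) = ψ·φᵀ, i.e. (adjugate A)_{ij} = ψ_i·φ_j for all i,j. In particular adjugate(A) has rank one. -/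
/-!
Since `rank A = n - 1`, `A` is singular and its kernel is a line `K ψ`. The identity
`A * adjugate A = det A • 1 = 0` puts every column of `adjugate A` in that line, so
`adjugate A = ψ φᵀ`, and `adjugate A * A = 0` then forces `φᵀ A = 0`. What remains is
`adjugate A ≠ 0`: for a left kernel vector `c` with `c j ≠ 0` and `ψ i ≠ 0`, the `(i, j)`
cofactor is nonzero, because a kernel vector of `A` with row `j` replaced by `eᵢ` is
annihilated by every row of `A`, hence is a multiple of `ψ` with vanishing `i`-th entry.
-/

open Matrix

namespace Matrix

variable {K m n p : Type*} [Field K] [Fintype n]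

theorem rank_eq_zero_iff {A : Matrix m n K} : A.rank = 0 ↔ A = 0 := by
  classical
  rw [rank, Submodule.finrank_eq_zero, LinearMap.range_eq_bot, ← toLin'_apply',
    LinearEquiv.map_eq_zero_iff]

theorem det_eq_zero_of_rank_lt [DecidableEq n] {A : Matrix n n K}
    (hA : A.rank < Fintype.card n) : A.det = 0 := by
  by_contra h
  exact hA.ne (rank_of_det_ne_zero h)

theorem finrank_ker_mulVecLin (A : Matrix m n K) :
    Module.finrank K (LinearMap.ker A.mulVecLin) = Fintype.card n - A.rank := by
  have := LinearMap.finrank_range_add_finrank_ker A.mulVecLin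
  rw [Module.finrank_fintype_fun_eq_card] at this
  rw [rank]
  omega

theorem exists_smul_eq_of_mulVec_eq_zero {A : Matrix m n K} (hA : A.rank + 1 = Fintype.card n)
    {ψ v : n → K} (hψ : ψ ≠ 0) (hAψ : A *ᵥ ψ = 0) (hAv : A *ᵥ v = 0) :
    ∃ t : K, t • ψ = v := by
  have hspan : K ∙ ψ = LinearMap.ker A.mulVecLin :=
    Submodule.eq_of_le_of_finrank_eq ((Submodule.span_singleton_le_iff_mem _ _).2 hAψ)
      (by rw [finrank_span_singleton hψ, finrank_ker_mulVecLin]; omega)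
  exact Submodule.mem_span_singleton.1 (hspan ▸ hAv)

theorem mulVec_eq_zero_of_vecMul_eq_zero [Fintype m] [DecidableEq m] {A : Matrix m n K} {c : m → K}
    {v : n → K} {j : m} (hc : c ᵥ* A = 0) (hcj : c j ≠ 0) (hv : ∀ k ≠ j, A k ⬝ᵥ v = 0) :
    A *ᵥ v = 0 := by
  have hsingle : A *ᵥ v = Pi.single j ((A *ᵥ v) j) := by
    ext k
    by_cases hk : k = j
    · subst hk; simp
    · simp [hk, mulVec, hv k hk]
  have : c j * (A *ᵥ v) j = 0 := by
    rw [← dotProduct_single, ← hsingle, dotProduct_mulVec, hc, zero_dotProduct]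
  rw [hsingle, (mul_eq_zero.1 this).resolve_left hcj, Pi.single_zero]

theorem exists_eq_vecMulVec_of_mul_eq_zero [Fintype p] {A : Matrix m n K}
    (hA : A.rank + 1 = Fintype.card n) {ψ : n → K} (hψ : ψ ≠ 0) (hAψ : A *ᵥ ψ = 0)
    {B : Matrix n p K} (hAB : A * B = 0) : ∃ φ : p → K, B = vecMulVec ψ φ := by
  have hcol : ∀ l, ∃ t : K, t • ψ = fun k => B k l := fun l =>
    exists_smul_eq_of_mulVec_eq_zero hA hψ hAψ <| by
      ext k
      simpa [mul_apply, mulVec, dotProduct] using congrFun (congrFun hAB k) l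
  choose φ hφ using hcol
  exact ⟨φ, by ext k l; rw [vecMulVec_apply, ← congrFun (hφ l) k, Pi.smul_apply, smul_eq_mul, mul_comm]⟩

theorem adjugate_apply_ne_zero [DecidableEq n] {A : Matrix n n K}
    (hA : A.rank + 1 = Fintype.card n) {ψ c : n → K} {i j : n} (hAψ : A *ᵥ ψ = 0)
    (hψi : ψ i ≠ 0) (hc : c ᵥ* A = 0) (hcj : c j ≠ 0) : A.adjugate i j ≠ 0 := by
  rw [adjugate_apply]
  intro hdet
  obtain ⟨v, hv, hBv⟩ := exists_mulVec_eq_zero_iff.2 hdet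
  have hvi : v i = 0 := by simpa [mulVec] using congrFun hBv j
  have hAv : A *ᵥ v = 0 := mulVec_eq_zero_of_vecMul_eq_zero hc hcj fun k hk => by
    simpa [mulVec, updateRow_ne hk] using congrFun hBv k
  obtain ⟨t, rfl⟩ :=
    exists_smul_eq_of_mulVec_eq_zero hA (fun h => hψi (by simp [h])) hAψ hAv
  have ht : t = 0 := by simpa [hψi] using hvi
  exact hv (by rw [ht, zero_smul])

end Matrix

/-- Rank-one structure of the adjugate: if `A` is an `n×n` matrix (`n ≥ 2`) over a field
with `rank A = n − 1`, then there are nonzero vectors `ψ` (in the kernel of `A`) and `φ`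
(in the left kernel of `A`) with `adjugate(A) = ψ·φᵀ`; in particular `adjugate(A)` has
rank one. -/
theorem adjugate_rank_one_of_rank_sub_one {𝕜 : Type*} [Field 𝕜] {n : ℕ} (hn : 2 ≤ n)
    (A : Matrix (Fin n) (Fin n) 𝕜) (hrank : A.rank = n - 1) :
    ∃ ψ φ : Fin n → 𝕜, ψ ≠ 0 ∧ φ ≠ 0 ∧ A.mulVec ψ = 0 ∧ A.vecMul φ = 0 ∧
      (∀ i j, A.adjugate i j = ψ i * φ j) ∧ A.adjugate.rank = 1 := by
  have hA : A.rank + 1 = Fintype.card (Fin n) := by rw [hrank, Fintype.card_fin]; omega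
  have hdet : A.det = 0 := det_eq_zero_of_rank_lt (by omega)
  obtain ⟨ψ, hψ, hAψ⟩ := exists_mulVec_eq_zero_iff.2 hdet
  obtain ⟨c, hc, hcA⟩ := exists_vecMul_eq_zero_iff.2 hdet
  obtain ⟨i, hψi⟩ := Function.ne_iff.1 hψ
  obtain ⟨j, hcj⟩ := Function.ne_iff.1 hc
  have hij : A.adjugate i j ≠ 0 := adjugate_apply_ne_zero hA hAψ hψi hcA hcj
  obtain ⟨φ, hadj⟩ :=
    exists_eq_vecMulVec_of_mul_eq_zero hA hψ hAψ (by rw [mul_adjugate, hdet, zero_smul])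
  have hφ : φ ≠ 0 := by rintro rfl; simp [hadj] at hij
  have hφA : φ ᵥ* A = 0 := by
    have : vecMulVec ψ (φ ᵥ* A) = 0 := by
      rw [← vecMulVec_mul, ← hadj, adjugate_mul, hdet, zero_smul]
    simpa [hψ] using this
  refine ⟨ψ, φ, hψ, hφ, hAψ, hφA, fun k l => by rw [hadj, vecMulVec_apply], ?_⟩
  refine le_antisymm (hadj ▸ rank_vecMulVec_le ψ φ) (Nat.one_le_iff_ne_zero.2 ?_)
  exact fun h => hij (by rw [Matrix.rank_eq_zero_iff.1 h, Matrix.zero_apply])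
end

section
/- (Evaluation of a Nijenhuis function generator at the eigenvalues.) Let U ⊆ ℝ^m be open and let N : U → L(ℝ^m, ℝ^m) be a smooth field of linear operators; for a covector ω ∈ (ℝ^m)* write N*ω := ω ∘ N(x). Let Φ : U × ℝ → ℝ, Δ : U × ℝ → ℝ be smooth, let α : U × ℝ → (ℝ^m)* be smooth, and let λ_j : U → ℝ be a smooth function such that for all x ∈ U: (i) for every fixed λ ∈ ℝ, the x-differential of Φ satisfies d_xΦ(x,λ) ∘ N(x) = λ·d_xΦ(x,λ) + Δ(x,λ)·α(x,λ); (ii) dλ_j(x) ∘ N(x) = λ_j(x)·dλ_j(x); (iii) Δ(x, λ_j(x)) = 0. Then the function Φ_j : U → ℝ, Φ_j(x) := Φ(x, λ_j(x)), satisfies dΦ_j(x) ∘ N(x) = λ_j(x)·dΦ_j(x) for all x ∈ U, i.e. Φ_j is a Nijenhuis function with eigenvalue λ_j. -/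
/-- Evaluation of a Nijenhuis function generator at the eigenvalues: if `Φ(·,λ)` satisfies
`d_xΦ ∘ N = λ·d_xΦ + Δ·α` for every `λ`, if `λⱼ` is an eigenfunction of `N*`
(`dλⱼ ∘ N = λⱼ·dλⱼ`) and a root of `Δ` (`Δ(x,λⱼ(x)) = 0`), then the evaluated function
`Φⱼ(x) = Φ(x,λⱼ(x))` is a Nijenhuis function with eigenvalue `λⱼ`:
`dΦⱼ ∘ N = λⱼ·dΦⱼ` on `U`. -/
theorem nijenhuis_generator_evaluation {m : ℕ}
    (U : Set (Fin m → ℝ)) (hU : IsOpen U)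
    (N : (Fin m → ℝ) → ((Fin m → ℝ) →L[ℝ] (Fin m → ℝ)))
    (Φ Δ : (Fin m → ℝ) → ℝ → ℝ)
    (α : (Fin m → ℝ) → ℝ → ((Fin m → ℝ) →L[ℝ] ℝ))
    (lamj : (Fin m → ℝ) → ℝ)
    (hN : ContDiffOn ℝ (⊤ : ℕ∞) N U)
    (hΦ : ContDiffOn ℝ (⊤ : ℕ∞) (fun q : (Fin m → ℝ) × ℝ => Φ q.1 q.2) (U ×ˢ Set.univ))
    (hΔ : ContDiffOn ℝ (⊤ : ℕ∞) (fun q : (Fin m → ℝ) × ℝ => Δ q.1 q.2) (U ×ˢ Set.univ))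
    (hα : ContDiffOn ℝ (⊤ : ℕ∞) (fun q : (Fin m → ℝ) × ℝ => α q.1 q.2) (U ×ˢ Set.univ))
    (hlamj : ContDiffOn ℝ (⊤ : ℕ∞) lamj U)
    (hgen : ∀ x ∈ U, ∀ lam : ℝ, ∀ v : Fin m → ℝ,
      fderiv ℝ (fun y => Φ y lam) x (N x v)
        = lam * fderiv ℝ (fun y => Φ y lam) x v + Δ x lam * α x lam v)
    (heig : ∀ x ∈ U, ∀ v : Fin m → ℝ,
      fderiv ℝ lamj x (N x v) = lamj x * fderiv ℝ lamj x v)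
    (hroot : ∀ x ∈ U, Δ x (lamj x) = 0) :
    ∀ x ∈ U, ∀ v : Fin m → ℝ,
      fderiv ℝ (fun y => Φ y (lamj y)) x (N x v)
        = lamj x * fderiv ℝ (fun y => Φ y (lamj y)) x v := by

  intro x hx v
  set F : (Fin m → ℝ) × ℝ → ℝ := fun q => Φ q.1 q.2 with hF_def
  have hx2 : (x, lamj x) ∈ U ×ˢ (Set.univ : Set ℝ) := ⟨hx, trivial⟩
  have hopen : IsOpen (U ×ˢ (Set.univ : Set ℝ)) := hU.prod isOpen_univ
  have hFdiff : DifferentiableAt ℝ F (x, lamj x) :=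
    (hΦ.contDiffAt (hopen.mem_nhds hx2)).differentiableAt (by simp)
  set DF := fderiv ℝ F (x, lamj x) with hDF_def
  have hF : HasFDerivAt F DF (x, lamj x) := hFdiff.hasFDerivAt
  have hlamdiff : DifferentiableAt ℝ lamj x :=
    (hlamj.contDiffAt (hU.mem_nhds hx)).differentiableAt (by simp)
  set Dl := fderiv ℝ lamj x with hDl_def
  have hl : HasFDerivAt lamj Dl x := hlamdiff.hasFDerivAt
  have hpair : HasFDerivAt (fun y : Fin m → ℝ => (y, lamj y))
      ((ContinuousLinearMap.id ℝ (Fin m → ℝ)).prod Dl) x :=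
    HasFDerivAt.prodMk (hasFDerivAt_id x) hl
  have hcomp : HasFDerivAt (fun y => Φ y (lamj y))
      (DF.comp ((ContinuousLinearMap.id ℝ (Fin m → ℝ)).prod Dl)) x := by have := hF.comp x hpair; exact this
  have hconstpair : HasFDerivAt (fun y : Fin m → ℝ => (y, lamj x))
      ((ContinuousLinearMap.id ℝ (Fin m → ℝ)).prod 0) x :=
    HasFDerivAt.prodMk (hasFDerivAt_id x) (hasFDerivAt_const _ _)
  have hconst : HasFDerivAt (fun y => Φ y (lamj x))
      (DF.comp ((ContinuousLinearMap.id ℝ (Fin m → ℝ)).prod 0)) x := by have := hF.comp x hconstpair; exact this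
  have hfd1 : ∀ w : Fin m → ℝ, fderiv ℝ (fun y => Φ y (lamj y)) x w = DF (w, Dl w) := by
    intro w; rw [hcomp.fderiv]; rfl
  have hfd2 : ∀ w : Fin m → ℝ, fderiv ℝ (fun y => Φ y (lamj x)) x w = DF (w, 0) := by
    intro w; rw [hconst.fderiv]; rfl
  have hsplit : ∀ (w : Fin m → ℝ) (s : ℝ), DF (w, s) = DF (w, 0) + s * DF (0, 1) := by
    intro w s
    have : (w, s) = (w, (0:ℝ)) + s • ((0 : Fin m → ℝ), (1:ℝ)) := by
      simp [Prod.ext_iff]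
    rw [this, map_add, map_smul, smul_eq_mul]
  have heq : Dl (N x v) = lamj x * Dl v := by
    have := heig x hx v
    rwa [hl.fderiv] at this
  have hg := hgen x hx (lamj x) v
  rw [hfd2, hfd2, hroot x hx] at hg
  rw [hfd1, hfd1, hsplit (N x v), hsplit v, heq, hg]
  ring
end

section
/- (Lenard recursion from vanishing Nijenhuis torsion.) Let U ⊆ ℝ^m be open and let N : U → L(ℝ^m, ℝ^m) be a smooth field of linear operators whose Nijenhuis torsion vanishes, i.e. for all x ∈ U and all u, v ∈ ℝ^m: DN(x)(N(x)u)(v) − DN(x)(N(x)v)(u) + N(x)(DN(x)(v)(u)) − N(x)(DN(x)(u)(v)) = 0, where DN(x) denotes the Fréchet derivative of N at x. Define I_k : U → ℝ by I_k(x) := (1/k)·trace(N(x)^k) for k ≥ 1. Then the Lenard recursion relations hold: for every k ≥ 1, every x ∈ U and every v ∈ ℝ^m, D I_{k+1}(x)(v) = D I_k(x)(N(x)·v); that is, N* dI_k = dI_{k+1}. -/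
/-- `I_k = (1/k)·trace(Nᵏ)` for a field of linear operators `N`. -/
noncomputable def traceInvariant {m : ℕ} (N : (Fin m → ℝ) → ((Fin m → ℝ) →L[ℝ] (Fin m → ℝ)))
    (k : ℕ) (y : Fin m → ℝ) : ℝ :=
  (1 / (k : ℝ)) * LinearMap.trace ℝ (Fin m → ℝ) ((N y ^ k : (Fin m → ℝ) →L[ℝ] (Fin m → ℝ)) :
    (Fin m → ℝ) →ₗ[ℝ] (Fin m → ℝ))

/-- Derivative of the `k`-th power of an algebra-valued function. -/
lemma hasFDerivAt_pow_aux {E 𝔸 : Type*} [NormedAddCommGroup E] [NormedSpace ℝ E]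
    [NormedRing 𝔸] [NormedAlgebra ℝ 𝔸] {f : E → 𝔸} {f' : E →L[ℝ] 𝔸} {x : E}
    (hf : HasFDerivAt f f' x) (k : ℕ) :
    ∃ P : E →L[ℝ] 𝔸, HasFDerivAt (fun y => f y ^ k) P x ∧
      ∀ v, P v = ∑ i ∈ Finset.range k, f x ^ i * f' v * f x ^ (k - 1 - i) := by
  induction k with
  | zero =>
      refine ⟨0, ?_, ?_⟩
      · simpa using hasFDerivAt_const (1 : 𝔸) x
      · simp
  | succ k ih =>
      obtain ⟨P, hP, hPv⟩ := ih
      refine ⟨f x ^ k • f' + P.smulRight (f x), ?_, ?_⟩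
      · have := hP.mul' hf
        convert this using 1
        · funext y; simp [pow_succ]
        · ext v; simp
      · intro v
        have h1 : (f x ^ k • f' + P.smulRight (f x)) v
            = f x ^ k * f' v + P v * f x := by
          simp [ContinuousLinearMap.smul_apply, smul_eq_mul]
        rw [h1, hPv, Finset.sum_range_succ, Finset.sum_mul]
        have h2 : ∀ i ∈ Finset.range k,
            f x ^ i * f' v * f x ^ (k - 1 - i) * f x
              = f x ^ i * f' v * f x ^ (k + 1 - 1 - i) := by
          intro i hi
          rw [Finset.mem_range] at hi
          rw [mul_assoc, ← pow_succ]
          congr 2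
          omega
        rw [Finset.sum_congr rfl h2]
        simp only [Nat.add_sub_cancel, Nat.sub_self, pow_zero, mul_one]
        rw [add_comm]

/-- Lenard recursion from vanishing Nijenhuis torsion: if the Nijenhuis torsion of the
smooth operator field `N` vanishes on `U`, then the traces `I_k = (1/k)·trace(Nᵏ)` satisfy
`dI_{k+1}(v) = dI_k(N·v)`, i.e. `N* dI_k = dI_{k+1}`. -/
theorem lenard_recursion_of_torsion_free {m : ℕ}
    (U : Set (Fin m → ℝ)) (hU : IsOpen U)
    (N : (Fin m → ℝ) → ((Fin m → ℝ) →L[ℝ] (Fin m → ℝ)))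
    (hN : ContDiffOn ℝ (⊤ : ℕ∞) N U)
    (htorsion : ∀ x ∈ U, ∀ u v : Fin m → ℝ,
      fderiv ℝ N x (N x u) v - fderiv ℝ N x (N x v) u
        + N x (fderiv ℝ N x v u) - N x (fderiv ℝ N x u v) = 0) :
    ∀ k : ℕ, 1 ≤ k → ∀ x ∈ U, ∀ v : Fin m → ℝ,
      fderiv ℝ (traceInvariant N (k + 1)) x v
        = fderiv ℝ (traceInvariant N k) x (N x v) := by
  intro k hk x hx v
  have hE : True := trivial
  -- differentiability of N at x
  have hdiff : DifferentiableAt ℝ N x :=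
    (hN.contDiffAt (hU.mem_nhds hx)).differentiableAt (by simp)
  set D : (Fin m → ℝ) →L[ℝ] ((Fin m → ℝ) →L[ℝ] (Fin m → ℝ)) := fderiv ℝ N x with hD
  have hDf : HasFDerivAt N D x := hdiff.hasFDerivAt
  have cmul : ∀ g h : (Fin m → ℝ) →L[ℝ] (Fin m → ℝ),
      ((g * h : (Fin m → ℝ) →L[ℝ] (Fin m → ℝ)) : (Fin m → ℝ) →ₗ[ℝ] (Fin m → ℝ))
        = (g : (Fin m → ℝ) →ₗ[ℝ] (Fin m → ℝ)) * (h : (Fin m → ℝ) →ₗ[ℝ] (Fin m → ℝ)) :=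
    fun _ _ => rfl
  have cp : ∀ (g : (Fin m → ℝ) →L[ℝ] (Fin m → ℝ)) (n : ℕ),
      ((g ^ n : (Fin m → ℝ) →L[ℝ] (Fin m → ℝ)) : (Fin m → ℝ) →ₗ[ℝ] (Fin m → ℝ))
        = (g : (Fin m → ℝ) →ₗ[ℝ] (Fin m → ℝ)) ^ n := by
    intro g n
    induction n with
    | zero => rfl
    | succ n ih => rw [pow_succ, pow_succ, cmul, ih]
  -- the trace as a continuous linear map
  set T : ((Fin m → ℝ) →L[ℝ] (Fin m → ℝ)) →ₗ[ℝ] ℝ :=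
    (LinearMap.trace ℝ (Fin m → ℝ)).comp (ContinuousLinearMap.coeLM ℝ) with hT
  set T' : ((Fin m → ℝ) →L[ℝ] (Fin m → ℝ)) →L[ℝ] ℝ := LinearMap.toContinuousLinearMap T with hT'
  -- formula for the derivative of traceInvariant
  have key : ∀ n : ℕ, 1 ≤ n → ∀ w : Fin m → ℝ,
      fderiv ℝ (traceInvariant N n) x w
        = LinearMap.trace ℝ (Fin m → ℝ) ((N x ^ (n - 1) * D w : (Fin m → ℝ) →L[ℝ] (Fin m → ℝ)) : (Fin m → ℝ) →ₗ[ℝ] (Fin m → ℝ)) := by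
    intro n hn w
    obtain ⟨P, hP, hPv⟩ := hasFDerivAt_pow_aux hDf n
    have hcomp : HasFDerivAt (traceInvariant N n)
        ((1 / (n : ℝ)) • (T'.comp P)) x := by
      have h1 : HasFDerivAt (fun y => T' (N y ^ n)) (T'.comp P) x :=
        (T'.hasFDerivAt).comp x hP
      have h2 := h1.const_mul (1 / (n : ℝ))
      exact h2
    rw [hcomp.fderiv]
    have hTP : T' (P w) = (n : ℝ) *
        LinearMap.trace ℝ (Fin m → ℝ) ((N x ^ (n - 1) * D w : (Fin m → ℝ) →L[ℝ] (Fin m → ℝ)) : (Fin m → ℝ) →ₗ[ℝ] (Fin m → ℝ)) := by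
      rw [hPv]
      rw [map_sum]
      have hterm : ∀ i ∈ Finset.range n,
          T' (N x ^ i * D w * N x ^ (n - 1 - i))
            = LinearMap.trace ℝ (Fin m → ℝ) ((N x ^ (n - 1) * D w : (Fin m → ℝ) →L[ℝ] (Fin m → ℝ)) : (Fin m → ℝ) →ₗ[ℝ] (Fin m → ℝ)) := by
        intro i hi
        rw [Finset.mem_range] at hi
        have hTval : ∀ g : (Fin m → ℝ) →L[ℝ] (Fin m → ℝ), T' g = LinearMap.trace ℝ (Fin m → ℝ) (g : (Fin m → ℝ) →ₗ[ℝ] (Fin m → ℝ)) := by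
          intro g; rfl
        rw [hTval]
        have hco : ((N x ^ i * D w * N x ^ (n - 1 - i) : (Fin m → ℝ) →L[ℝ] (Fin m → ℝ)) : (Fin m → ℝ) →ₗ[ℝ] (Fin m → ℝ))
            = ((N x ^ i : (Fin m → ℝ) →L[ℝ] (Fin m → ℝ)) : (Fin m → ℝ) →ₗ[ℝ] (Fin m → ℝ)) * ((D w : (Fin m → ℝ) →L[ℝ] (Fin m → ℝ)) : (Fin m → ℝ) →ₗ[ℝ] (Fin m → ℝ))
              * ((N x ^ (n - 1 - i) : (Fin m → ℝ) →L[ℝ] (Fin m → ℝ)) : (Fin m → ℝ) →ₗ[ℝ] (Fin m → ℝ)) := by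
          rw [cmul, cmul]
        have hco2 : ((N x ^ (n - 1) * D w : (Fin m → ℝ) →L[ℝ] (Fin m → ℝ)) : (Fin m → ℝ) →ₗ[ℝ] (Fin m → ℝ))
            = ((N x ^ (n - 1) : (Fin m → ℝ) →L[ℝ] (Fin m → ℝ)) : (Fin m → ℝ) →ₗ[ℝ] (Fin m → ℝ)) * ((D w : (Fin m → ℝ) →L[ℝ] (Fin m → ℝ)) : (Fin m → ℝ) →ₗ[ℝ] (Fin m → ℝ)) := by
          rw [cmul]
        rw [hco, hco2, LinearMap.trace_mul_comm, ← mul_assoc]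
        congr 2
        have : ((N x ^ (n - 1 - i) * N x ^ i : (Fin m → ℝ) →L[ℝ] (Fin m → ℝ)) : (Fin m → ℝ) →ₗ[ℝ] (Fin m → ℝ))
            = ((N x ^ (n - 1) : (Fin m → ℝ) →L[ℝ] (Fin m → ℝ)) : (Fin m → ℝ) →ₗ[ℝ] (Fin m → ℝ)) := by
          have he : n - 1 - i + i = n - 1 := by omega
          rw [cmul, cp, cp, ← pow_add, he, cp]
        exact this
      rw [Finset.sum_congr rfl hterm, Finset.sum_const, Finset.card_range,
        nsmul_eq_mul]
    have happ : ((1 / (n : ℝ)) • (T'.comp P)) w = (1 / (n : ℝ)) * T' (P w) := rfl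
    rw [happ, hTP]
    have hn' : (n : ℝ) ≠ 0 := by positivity
    field_simp
  -- rewrite both sides using key
  rw [key (k + 1) (by omega) v, key k hk (N x v)]
  simp only [Nat.add_sub_cancel]
  -- torsion identity as an operator identity
  have hop : D (N x v) = (D.flip v) * (N x) + (N x) * (D v) - (N x) * (D.flip v) := by
    refine ContinuousLinearMap.ext fun u => ?_
    have h := htorsion x hx u v
    simp only [ContinuousLinearMap.sub_apply, ContinuousLinearMap.add_apply,
      ContinuousLinearMap.mul_apply, ContinuousLinearMap.flip_apply]
    have hgoal : D (N x v) u = D (N x u) v + N x (D v u) - N x (D u v) := by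
      have h' : D (N x u) v - D (N x v) u + N x (D v u) - N x (D u v) = 0 := h
      linear_combination -h'
    exact hgoal
  rw [hop]
  -- now compute traces
  set A : (Fin m → ℝ) →ₗ[ℝ] (Fin m → ℝ) := ((N x : (Fin m → ℝ) →L[ℝ] (Fin m → ℝ)) : (Fin m → ℝ) →ₗ[ℝ] (Fin m → ℝ)) with hA
  set Dv : (Fin m → ℝ) →ₗ[ℝ] (Fin m → ℝ) := ((D v : (Fin m → ℝ) →L[ℝ] (Fin m → ℝ)) : (Fin m → ℝ) →ₗ[ℝ] (Fin m → ℝ)) with hDv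
  set Cv : (Fin m → ℝ) →ₗ[ℝ] (Fin m → ℝ) := ((D.flip v : (Fin m → ℝ) →L[ℝ] (Fin m → ℝ)) : (Fin m → ℝ) →ₗ[ℝ] (Fin m → ℝ)) with hCv
  have hcoe : ((N x ^ (k - 1) * ((D.flip v) * (N x) + (N x) * (D v) - (N x) * (D.flip v))
      : (Fin m → ℝ) →L[ℝ] (Fin m → ℝ)) : (Fin m → ℝ) →ₗ[ℝ] (Fin m → ℝ))
      = A ^ (k - 1) * (Cv * A + A * Dv - A * Cv) := by
    rw [cmul, cp, ContinuousLinearMap.coe_sub, ContinuousLinearMap.coe_add, cmul, cmul, cmul]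
  have hcoe2 : ((N x ^ k * D v : (Fin m → ℝ) →L[ℝ] (Fin m → ℝ)) : (Fin m → ℝ) →ₗ[ℝ] (Fin m → ℝ)) = A ^ k * Dv := by rw [cmul, cp]
  rw [hcoe, hcoe2]
  have hAk : A ^ (k - 1) * A = A ^ k := by
    rw [← pow_succ]
    congr 1
    omega
  rw [mul_sub, mul_add, map_sub, map_add]
  have t1 : LinearMap.trace ℝ (Fin m → ℝ) (A ^ (k - 1) * (Cv * A)) = LinearMap.trace ℝ (Fin m → ℝ) (A ^ k * Cv) := by
    rw [← mul_assoc, LinearMap.trace_mul_comm, ← mul_assoc]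
    have hAk2 : A * A ^ (k - 1) = A ^ k := by
      conv_rhs => rw [show k = (k - 1) + 1 by omega]
      rw [pow_succ']
    rw [hAk2]
  have t2 : LinearMap.trace ℝ (Fin m → ℝ) (A ^ (k - 1) * (A * Dv)) = LinearMap.trace ℝ (Fin m → ℝ) (A ^ k * Dv) := by
    rw [← mul_assoc, hAk]
  have t3 : LinearMap.trace ℝ (Fin m → ℝ) (A ^ (k - 1) * (A * Cv)) = LinearMap.trace ℝ (Fin m → ℝ) (A ^ k * Cv) := by
    rw [← mul_assoc, hAk]
  rw [t1, t2, t3]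
  ring
end
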